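/- arXiv:math/0404154 — 4 statements merged into one kernel-verified Lean document; each statement's English description precedes it below -/
import Mathlib

section
/- Let λ_{m_1} < λ_{m_2} < ... < λ_{m_r} be the atypical entries of a weight with value set S(λ) ⊆ ℤ, and for 1 ≤ s ≤ t ≤ r define ℓ_{s,t} = #([λ_{m_s}, λ_{m_t}] \ S(λ)) and classify c_{s,t} as 'c' if ℓ_{s,t} < t - s, as 'q' if ℓ_{s,t} = t - s, and as 'n' if ℓ_{s,t} > t - s. Then the relation 'c' is transitive: if c_{s,t} = c and c_{t,u} = c for s < t < u, then c_{s,u} = c. -/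
/-- `ℓ(a,b)` : the number of integers in `[a,b]` not lying in the finite set `S`. -/
noncomputable def gapCount (S : Finset ℤ) (a b : ℤ) : ℕ :=
  ((Finset.Icc a b).filter (fun z => z ∉ S)).card

/-- Transitivity of the relation `c`: with atypical entries `x 1 < x 2 < ... < x r` lying in
`S`, and `c_{s,t} = c` meaning `ℓ_{s,t} < t - s`, if `c_{s,t} = c` and `c_{t,u} = c` for
`s < t < u`, then `c_{s,u} = c`. -/
theorem crel_c_trans (S : Finset ℤ) (r : ℕ) (x : ℕ → ℤ)
    (hmono : ∀ i j, 1 ≤ i → i < j → j ≤ r → x i < x j)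
    (hmem : ∀ i, 1 ≤ i → i ≤ r → x i ∈ S)
    (s t u : ℕ) (hs : 1 ≤ s) (hst : s < t) (htu : t < u) (hur : u ≤ r)
    (hst_c : gapCount S (x s) (x t) < t - s)
    (htu_c : gapCount S (x t) (x u) < u - t) :
    gapCount S (x s) (x u) < u - s := by
  have h1 : x s < x t := hmono s t hs hst (by omega)
  have h2 : x t < x u := hmono t u (by omega) htu hur
  have hsub : Finset.Icc (x s) (x u) ⊆ Finset.Icc (x s) (x t) ∪ Finset.Icc (x t) (x u) := by
    intro z hz
    simp only [Finset.mem_Icc, Finset.mem_union] at *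
    omega
  have key : gapCount S (x s) (x u) ≤ gapCount S (x s) (x t) + gapCount S (x t) (x u) := by
    unfold gapCount
    calc ((Finset.Icc (x s) (x u)).filter (fun z => z ∉ S)).card
        ≤ (((Finset.Icc (x s) (x t)) ∪ (Finset.Icc (x t) (x u))).filter (fun z => z ∉ S)).card :=
          Finset.card_le_card (Finset.filter_subset_filter _ hsub)
      _ = (((Finset.Icc (x s) (x t)).filter (fun z => z ∉ S)) ∪
            ((Finset.Icc (x t) (x u)).filter (fun z => z ∉ S))).card := by
          rw [Finset.filter_union]
      _ ≤ _ := Finset.card_union_le _ _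
  omega
end

section
/- Composition of lowering operators: let S ⊆ ℤ be finite, x ∈ S, and for an element x define L(x) = x - k̲^(1)(x) where k̲^(1)(x) is the smallest k > 0 with [x-k, x] containing exactly one integer not in S, and where after applying L the set S is updated by replacing x with L(x). Then applying L ν times to x yields x - k̲^(ν)(x), where k̲^(ν)(x) is the smallest k > 0 such that #([x-k, x] \ S) = ν (computed with the original S). -/
lemma key_step (S : Finset ℤ) (x a : ℤ) (ha : a ≤ x) :
    sSup {w : ℤ | w < a ∧ w ∉ S.erase x} < a ∧
    sSup {w : ℤ | w < a ∧ w ∉ S.erase x} ∉ S.erase x ∧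
    gapCount S (sSup {w : ℤ | w < a ∧ w ∉ S.erase x}) x = gapCount S a x + 1 := by
  set T : Set ℤ := {w : ℤ | w < a ∧ w ∉ S.erase x} with hT
  have hne : T.Nonempty := by
    have hinf : (Set.Iio a \ (S.erase x : Set ℤ)).Infinite :=
      (Set.Iio_infinite a).diff (S.erase x).finite_toSet
    obtain ⟨w, hw⟩ := hinf.nonempty
    exact ⟨w, hw.1, hw.2⟩
  have hbdd : BddAbove T := ⟨a, fun w hw => le_of_lt hw.1⟩
  have hmem : sSup T ∈ T := Int.csSup_mem hne hbdd
  set b := sSup T with hb'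
  have hb : b < a := hmem.1
  have hbS : b ∉ S.erase x := hmem.2
  refine ⟨hb, hbS, ?_⟩
  have hmax : ∀ w, w < a → w ∉ S.erase x → w ≤ b := fun w h1 h2 => le_csSup hbdd ⟨h1, h2⟩
  have hsplit : Finset.Icc b x = Finset.Ico b a ∪ Finset.Icc a x := by
    ext w
    simp only [Finset.mem_Icc, Finset.mem_union, Finset.mem_Ico]
    omega
  have hfilter : (Finset.Ico b a).filter (fun z => z ∉ S) = {b} := by
    ext w
    simp only [Finset.mem_filter, Finset.mem_Ico, Finset.mem_singleton]
    constructor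
    · rintro ⟨⟨h1, h2⟩, h3⟩
      by_contra hne'
      have hwe : w ∉ S.erase x := fun hw => h3 (Finset.mem_of_mem_erase hw)
      have := hmax w h2 hwe
      omega
    · rintro rfl
      refine ⟨⟨le_refl b, hb⟩, ?_⟩
      intro hbS'
      exact hbS (Finset.mem_erase.2 ⟨by omega, hbS'⟩)
  have hdisj : Disjoint (Finset.Ico b a) (Finset.Icc a x) := by
    rw [Finset.disjoint_left]
    intro w hw hw'
    simp only [Finset.mem_Ico] at hw
    simp only [Finset.mem_Icc] at hw'
    omega
  unfold gapCount
  rw [hsplit, Finset.filter_union, Finset.card_union_of_disjoint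
    (hdisj.mono (Finset.filter_subset _ _) (Finset.filter_subset _ _)), hfilter]
  simp [Nat.add_comm]

lemma gap_lt (S : Finset ℤ) (x z1 z2 : ℤ) (h12 : z1 < z2) (hz2 : z2 ≤ x)
    (h1 : z1 ∉ S) : gapCount S z2 x < gapCount S z1 x := by
  unfold gapCount
  have hsub : insert z1 ((Finset.Icc z2 x).filter (fun z => z ∉ S)) ⊆
      (Finset.Icc z1 x).filter (fun z => z ∉ S) := by
    intro w hw
    rcases Finset.mem_insert.1 hw with rfl | hw
    · simp only [Finset.mem_filter, Finset.mem_Icc]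
      exact ⟨⟨le_refl _, by omega⟩, h1⟩
    · simp only [Finset.mem_filter, Finset.mem_Icc] at hw ⊢
      exact ⟨⟨by omega, hw.1.2⟩, hw.2⟩
  have hle := Finset.card_le_card hsub
  rwa [Finset.card_insert_of_notMem (by
    intro h
    simp only [Finset.mem_filter, Finset.mem_Icc] at h
    omega)] at hle

/-- Composition of lowering operators.  Start at `x ∈ S` and repeatedly move to the
largest integer below the current position not lying in the updated set
`(S \ {x}) ∪ {current}` (for `w` below the current position this membership is
equivalent to `w ∉ S.erase x`).  After `ν ≥ 1` steps one lands at `x - k̲^(ν)(x)`,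
where `k̲^(ν)(x)` is the smallest `k > 0` with `#([x-k, x] \ S) = ν`, computed with
the original set `S`. -/
theorem lower_iterate (S : Finset ℤ) (x : ℤ) (hx : x ∈ S)
    (y : ℕ → ℤ) (hy0 : y 0 = x)
    (hstep : ∀ i, y (i + 1) = sSup {w : ℤ | w < y i ∧ w ∉ S.erase x})
    (ν : ℕ) (hν : 1 ≤ ν)
    (k : ℤ) (hk : 0 < k) (hcard : gapCount S (x - k) x = ν)
    (hmin : ∀ k' : ℤ, 0 < k' → k' < k → gapCount S (x - k') x ≠ ν) :
    y ν = x - k := by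
  have h0 : gapCount S x x = 0 := by
    unfold gapCount
    rw [Finset.Icc_self, Finset.filter_singleton]
    simp [hx]
  have hxk : x - k ∉ S := by
    intro hmem
    have heq : gapCount S (x - k) x = gapCount S (x - (k - 1)) x := by
      unfold gapCount
      congr 1
      ext w
      simp only [Finset.mem_filter, Finset.mem_Icc]
      constructor
      · rintro ⟨⟨hw1, hw2⟩, hw3⟩
        refine ⟨⟨?_, hw2⟩, hw3⟩
        rcases eq_or_lt_of_le hw1 with rfl | h
        · exact absurd hmem hw3
        · omega
      · rintro ⟨⟨hw1, hw2⟩, hw3⟩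
        exact ⟨⟨by omega, hw2⟩, hw3⟩
    rcases eq_or_lt_of_le (show (1:ℤ) ≤ k by omega) with h1 | h1
    · rw [heq, ← h1] at hcard
      norm_num at hcard
      omega
    · exact hmin (k - 1) (by omega) (by omega) (by rw [← heq, hcard])
  have main : ∀ i, 1 ≤ i → y i < x ∧ y i ∉ S.erase x ∧ gapCount S (y i) x = i := by
    intro i hi
    induction i with
    | zero => omega
    | succ n ih =>
      rcases Nat.lt_or_ge n 1 with h | h
      · have hn : n = 0 := by omega
        subst hn
        have hkey := key_step S x x le_rfl
        rw [hstep 0, hy0] at *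
        exact ⟨hkey.1, hkey.2.1, by rw [hkey.2.2, h0]⟩
      · obtain ⟨h1, h2, h3⟩ := ih h
        have hkey := key_step S x (y n) h1.le
        rw [hstep n]
        exact ⟨lt_trans hkey.1 h1, hkey.2.1, by rw [hkey.2.2, h3]⟩
  obtain ⟨h1, h2, h3⟩ := main ν hν
  have hyS : y ν ∉ S := fun h => h2 (Finset.mem_erase.2 ⟨ne_of_lt h1, h⟩)
  rcases lt_trichotomy (y ν) (x - k) with h | h | h
  · have := gap_lt S x (y ν) (x - k) h (by omega) hyS
    omega
  · exact h
  · have := gap_lt S x (x - k) (y ν) h h1.le hxk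
    omega
end

section
/- For λ ∈ D_r with nqc-relations c_{s,t}, define p_s = s if s = r or c_{s,s+1} ≠ c, and otherwise p_s = max{p ∈ [s+1, r] : c_{s,s+1} = ... = c_{s,p} = c}. Then the intervals have the nesting property: s ≤ t ≤ p_t ≤ p_s for all t ∈ [s, p_s]. -/
lemma gap_add (S : Finset ℤ) (a b c : ℤ) (hab : a ≤ b) (hbc : b ≤ c) (hb : b ∈ S) :
    gapCount S a c = gapCount S a b + gapCount S b c := by
  unfold gapCount
  have h1 : (Finset.Icc b c).filter (fun z => z ∉ S)
      = (Finset.Ioc b c).filter (fun z => z ∉ S) := by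
    ext z
    simp only [Finset.mem_filter, Finset.mem_Icc, Finset.mem_Ioc]
    constructor
    · rintro ⟨⟨h1, h2⟩, h3⟩
      exact ⟨⟨lt_of_le_of_ne h1 (by rintro rfl; exact h3 hb), h2⟩, h3⟩
    · rintro ⟨⟨h1, h2⟩, h3⟩; exact ⟨⟨h1.le, h2⟩, h3⟩
  have hdisj : Disjoint ((Finset.Icc a b).filter (fun z => z ∉ S))
      ((Finset.Ioc b c).filter (fun z => z ∉ S)) := by
    apply Finset.disjoint_filter_filter
    rw [Finset.disjoint_left]
    intro z hz hz'
    simp only [Finset.mem_Icc, Finset.mem_Ioc] at hz hz'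
    omega
  have hunion : Finset.Icc a b ∪ Finset.Ioc b c = Finset.Icc a c := by
    ext z
    simp only [Finset.mem_union, Finset.mem_Icc, Finset.mem_Ioc]
    omega
  rw [h1, ← Finset.card_union_of_disjoint hdisj, ← Finset.filter_union, hunion]

/-- Nesting property of the intervals `[s, p_s]`.  With atypical entries
`x 1 < ... < x r` in `S` and `c_{s,t} = c` meaning `ℓ_{s,t} < t - s`, let
`p s` be the largest `p ≥ s` with `c_{s,s+1} = ... = c_{s,p} = c` (and `p s = s`
if `s = r` or `c_{s,s+1} ≠ c`).  Then `s ≤ t ≤ p t ≤ p s` for all `t ∈ [s, p s]`. -/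
theorem p_interval_nesting (S : Finset ℤ) (r : ℕ) (x : ℕ → ℤ)
    (hmono : ∀ i j, 1 ≤ i → i < j → j ≤ r → x i < x j)
    (hmem : ∀ i, 1 ≤ i → i ≤ r → x i ∈ S)
    (p : ℕ → ℕ)
    (hp : ∀ s, 1 ≤ s → s ≤ r →
      s ≤ p s ∧ p s ≤ r ∧
      (∀ t, s < t → t ≤ p s → gapCount S (x s) (x t) < t - s) ∧
      (p s < r → ¬ gapCount S (x s) (x (p s + 1)) < p s + 1 - s)) :
    ∀ s t, 1 ≤ s → s ≤ r → s ≤ t → t ≤ p s → t ≤ p t ∧ p t ≤ p s := by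
  intro s t hs1 hsr hst htps
  obtain ⟨hsp, hpr, hc, hmax⟩ := hp s hs1 hsr
  have ht1 : 1 ≤ t := hs1.trans hst
  have htr : t ≤ r := htps.trans hpr
  obtain ⟨htp, hptr, hct, _⟩ := hp t ht1 htr
  refine ⟨htp, ?_⟩
  by_contra h
  push_neg at h
  have hpsr : p s < r := lt_of_lt_of_le h hptr
  apply hmax hpsr
  rcases eq_or_lt_of_le hst with rfl | hlt
  · exact hct _ (Nat.lt_succ_of_le hsp) h
  · have h1 := hc t hlt htps
    have h2 := hct (p s + 1) (Nat.lt_succ_of_le htps) h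
    have hmemt : x t ∈ S := hmem t ht1 htr
    have hxst : x s ≤ x t := (hmono s t hs1 hlt htr).le
    have hxtu : x t ≤ x (p s + 1) :=
      (hmono t (p s + 1) ht1 (Nat.lt_succ_of_le htps) hpsr).le
    rw [gap_add S (x s) (x t) (x (p s + 1)) hxst hxtu hmemt]
    omega
end

section
/- Let S ⊆ ℤ be finite containing strictly increasing elements x_1 < x_2 < ... < x_r (the atypical entries), with nqc-relations c_{s,t} as above, and let p_s be as defined (the largest p ≥ s with c_{s,s+1} = ... = c_{s,p} = c, or s if none). Define k_s = min{k > 0 : #([x_s, x_s + k] \ S) = p_s + 1 - s}. Then for each s, k_s is the smallest positive integer such that x_s + k_s ∉ S ∪ {x_t + k_t : t > s, computed by the sequential procedure in which each computed value x_t + k_t is added to S}. -/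
lemma gapCount_mono (S : Finset ℤ) (a : ℤ) {b c : ℤ} (h : b ≤ c) :
    gapCount S a b ≤ gapCount S a c :=
  Finset.card_le_card (Finset.filter_subset_filter _ (Finset.Icc_subset_Icc_right h))

lemma gapCount_split (S : Finset ℤ) {a b c : ℤ} (h1 : a ≤ b) (h2 : b ≤ c) :
    gapCount S a c = gapCount S a b + ((Finset.Ioc b c).filter (fun z => z ∉ S)).card := by
  unfold gapCount
  have hu : Finset.Icc a c = Finset.Icc a b ∪ Finset.Ioc b c := by
    ext z
    simp only [Finset.mem_Icc, Finset.mem_Ioc, Finset.mem_union]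
    omega
  rw [hu, Finset.filter_union, Finset.card_union_of_disjoint]
  apply Finset.disjoint_filter_filter
  rw [Finset.disjoint_left]
  intro z hz hz'
  simp only [Finset.mem_Icc, Finset.mem_Ioc] at hz hz'
  omega

lemma gapCount_step (S : Finset ℤ) {a y : ℤ} (h : a < y) :
    gapCount S a y = gapCount S a (y - 1) + (if y ∈ S then 0 else 1) := by
  have h2 : Finset.Ioc (y - 1) y = {y} := by
    ext z
    simp only [Finset.mem_Ioc, Finset.mem_singleton]
    omega
  rw [gapCount_split S (by omega : a ≤ y - 1) (by omega : y - 1 ≤ y), h2]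
  rw [Finset.filter_singleton]
  by_cases hy : y ∈ S <;> simp [hy]

lemma gapCount_add (S : Finset ℤ) {a b c : ℤ} (h1 : a ≤ b) (h2 : b ≤ c) (hb : b ∈ S) :
    gapCount S a c = gapCount S a b + gapCount S b c := by
  rw [gapCount_split S h1 h2]
  congr 1
  unfold gapCount
  rw [Finset.Icc_eq_cons_Ioc h2, Finset.filter_cons]
  simp [hb]

lemma gapCount_self (S : Finset ℤ) {a : ℤ} (ha : a ∈ S) : gapCount S a a = 0 := by
  unfold gapCount
  rw [Finset.Icc_self, Finset.filter_singleton]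
  simp [ha]

lemma gapCount_lt (S : Finset ℤ) {a y₁ y₂ : ℤ} (h0 : a ≤ y₁) (h : y₁ < y₂) (hy : y₂ ∉ S) :
    gapCount S a y₁ < gapCount S a y₂ := by
  have hs := gapCount_step S (show a < y₂ by omega)
  have hm : gapCount S a y₁ ≤ gapCount S a (y₂ - 1) := gapCount_mono S a (by omega)
  simp only [hy, if_false] at hs
  omega

lemma gap_eq (S : Finset ℤ) {a y₁ y₂ : ℤ} (h1 : a ≤ y₁) (h2 : a ≤ y₂)
    (hy1 : y₁ ∉ S) (hy2 : y₂ ∉ S)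
    (h : gapCount S a y₁ = gapCount S a y₂) : y₁ = y₂ := by
  by_contra hne
  rcases lt_or_gt_of_ne hne with hlt | hlt
  · exact absurd h (Nat.ne_of_lt (gapCount_lt S h1 hlt hy2))
  · exact absurd h.symm (Nat.ne_of_lt (gapCount_lt S h2 hlt hy1))

/-- Sequential procedure for the raising amounts `k_s`.  With atypical entries
`x 1 < ... < x r` in `S`, `c_{s,t} = c` meaning `ℓ_{s,t} < t - s`, and `p s` as in
(3.6), let `k s` be the smallest `k > 0` with `#([x_s, x_s + k] \ S) = p_s + 1 - s`.
Then `k s` is the smallest positive integer such that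
`x_s + k_s ∉ S ∪ {x_t + k_t : t > s}`: i.e. `x_s + k_s` avoids `S` and all the
previously computed values `x_t + k_t` (`t > s`), and every smaller positive shift
hits `S` or one of those values. -/
theorem k_sequential_procedure (S : Finset ℤ) (r : ℕ) (x : ℕ → ℤ)
    (hmono : ∀ i j, 1 ≤ i → i < j → j ≤ r → x i < x j)
    (hmem : ∀ i, 1 ≤ i → i ≤ r → x i ∈ S)
    (p : ℕ → ℕ)
    (hp : ∀ s, 1 ≤ s → s ≤ r →
      s ≤ p s ∧ p s ≤ r ∧
      (∀ t, s < t → t ≤ p s → gapCount S (x s) (x t) < t - s) ∧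
      (p s < r → ¬ gapCount S (x s) (x (p s + 1)) < p s + 1 - s))
    (k : ℕ → ℤ)
    (hk : ∀ s, 1 ≤ s → s ≤ r →
      0 < k s ∧ gapCount S (x s) (x s + k s) = p s + 1 - s ∧
      ∀ k' : ℤ, 0 < k' → k' < k s → gapCount S (x s) (x s + k') ≠ p s + 1 - s) :
    ∀ s, 1 ≤ s → s ≤ r →
      (x s + k s ∉ S ∧ ∀ t, s < t → t ≤ r → x s + k s ≠ x t + k t) ∧
      (∀ j : ℤ, 0 < j → j < k s →
        x s + j ∈ S ∨ ∃ t, s < t ∧ t ≤ r ∧ x s + j = x t + k t) := by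
  -- Key fact 1: `x s + k s ∉ S` and the gap count just below `k s` is `p s - s`.
  have key1 : ∀ s, 1 ≤ s → s ≤ r →
      x s + k s ∉ S ∧ gapCount S (x s) (x s + k s - 1) = p s - s := by
    intro s hs1 hsr
    obtain ⟨hks0, hkseq, hksmin⟩ := hk s hs1 hsr
    obtain ⟨hps1, hps2, -, -⟩ := hp s hs1 hsr
    have hg0 : gapCount S (x s) (x s) = 0 := gapCount_self S (hmem s hs1 hsr)
    have hstep := gapCount_step S (show x s < x s + k s by omega)
    have hmono' : gapCount S (x s) (x s + k s - 1) ≤ gapCount S (x s) (x s + k s) :=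
      gapCount_mono S _ (by omega)
    have hne : gapCount S (x s) (x s + k s - 1) ≠ p s + 1 - s := by
      by_cases h1 : k s = 1
      · rw [show x s + k s - 1 = x s by omega, hg0]
        omega
      · have := hksmin (k s - 1) (by omega) (by omega)
        rwa [show x s + (k s - 1) = x s + k s - 1 by ring] at this
    have hnotS : x s + k s ∉ S := by
      intro hmemS
      simp only [hmemS, if_true] at hstep
      omega
    simp only [hnotS, if_false] at hstep
    exact ⟨hnotS, by omega⟩
  -- Key fact 2: within a block, `p t ≤ p s`.
  have key2 : ∀ s t, 1 ≤ s → s ≤ r → s < t → t ≤ p s → p t ≤ p s := by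
    intro s t hs1 hsr hst htps
    obtain ⟨hps1, hps2, hpc, hpn⟩ := hp s hs1 hsr
    have htr : t ≤ r := le_trans htps hps2
    have ht1 : 1 ≤ t := by omega
    obtain ⟨hpt1, hpt2, hpct, -⟩ := hp t ht1 htr
    by_contra hgt
    push_neg at hgt
    have hps_lt_r : p s < r := by omega
    have hpn' := hpn hps_lt_r
    have h2 := hpct (p s + 1) (by omega) (by omega)
    have hl := hpc t hst htps
    have hxst : x s < x t := hmono s t hs1 hst htr
    have hxts : x t < x (p s + 1) := hmono t (p s + 1) ht1 (by omega) (by omega)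
    have hadd2 : gapCount S (x s) (x (p s + 1)) =
        gapCount S (x s) (x t) + gapCount S (x t) (x (p s + 1)) :=
      gapCount_add S (le_of_lt hxst) (le_of_lt hxts) (hmem t ht1 htr)
    omega
  -- Key fact 3: the index of `x t + k t` among the gaps above `x s`.
  have key3 : ∀ s t, 1 ≤ s → s < t → t ≤ r →
      gapCount S (x s) (x t + k t) = gapCount S (x s) (x t) + (p t + 1 - t) := by
    intro s t hs1 hst htr
    have ht1 : 1 ≤ t := by omega
    obtain ⟨hkt0, hkteq, -⟩ := hk t ht1 htr
    have hxst : x s < x t := hmono s t hs1 hst htr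
    rw [gapCount_add S (le_of_lt hxst) (by omega) (hmem t ht1 htr), hkteq]
  -- Key fact A : the computed value at level `s` differs from all later ones.
  have keyA : ∀ s t, 1 ≤ s → s < t → t ≤ r → x s + k s ≠ x t + k t := by
    intro s t hs1 hst htr
    have hsr : s ≤ r := by omega
    have ht1 : 1 ≤ t := by omega
    obtain ⟨hks0, hkseq, -⟩ := hk s hs1 hsr
    obtain ⟨hps1, hps2, hpc, hpn⟩ := hp s hs1 hsr
    obtain ⟨hpt1, -, -, -⟩ := hp t ht1 htr
    have hadd := key3 s t hs1 hst htr
    intro heq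
    have hcount : gapCount S (x s) (x s + k s) = gapCount S (x s) (x t + k t) := by rw [heq]
    rw [hkseq, hadd] at hcount
    by_cases hcase : t ≤ p s
    · have hl := hpc t hst hcase
      have hptps : p t ≤ p s := key2 s t hs1 hsr hst hcase
      omega
    · push_neg at hcase
      have hps_lt_r : p s < r := by omega
      have hpn' := hpn hps_lt_r
      have hmle : gapCount S (x s) (x (p s + 1)) ≤ gapCount S (x s) (x t) := by
        rcases eq_or_lt_of_le (show p s + 1 ≤ t by omega) with he | hlt2
        · rw [he]
        · exact gapCount_mono S _ (le_of_lt (hmono (p s + 1) t (by omega) hlt2 htr))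
      omega
  -- main proof
  intro s hs1 hsr
  obtain ⟨hnotS, hprev⟩ := key1 s hs1 hsr
  obtain ⟨hks0, hkseq, hksmin⟩ := hk s hs1 hsr
  obtain ⟨hps1, hps2, hpc, hpn⟩ := hp s hs1 hsr
  refine ⟨⟨hnotS, fun t hst htr => keyA s t hs1 hst htr⟩, ?_⟩
  intro j hj0 hjks
  by_cases hjS : x s + j ∈ S
  · exact Or.inl hjS
  · right
    have hm1 : 1 ≤ gapCount S (x s) (x s + j) := by
      have hstep := gapCount_step S (show x s < x s + j by omega)
      simp only [hjS, if_false] at hstep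
      omega
    have hm2 : gapCount S (x s) (x s + j) ≤ p s - s := by
      have h1 : gapCount S (x s) (x s + j) ≤ gapCount S (x s) (x s + k s - 1) :=
        gapCount_mono S _ (by omega)
      omega
    -- the map `t ↦ gapCount S (x s) (x t + k t)` from `Ioc s (p s)` to `Icc 1 (p s - s)`
    have hmaps : ∀ t (ht : t ∈ Finset.Ioc s (p s)),
        (fun t _ => gapCount S (x s) (x t + k t)) t ht ∈ Finset.Icc 1 (p s - s) := by
      intro t ht
      show gapCount S (x s) (x t + k t) ∈ Finset.Icc 1 (p s - s)
      rw [Finset.mem_Ioc] at ht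
      have htr : t ≤ r := le_trans ht.2 hps2
      have ht1 : 1 ≤ t := by omega
      obtain ⟨hpt1, -, -, -⟩ := hp t ht1 htr
      have hadd := key3 s t hs1 ht.1 htr
      have hl := hpc t ht.1 ht.2
      have hptps : p t ≤ p s := key2 s t hs1 hsr ht.1 ht.2
      rw [Finset.mem_Icc]
      omega
    have hinj : ∀ t₁ t₂ (h₁ : t₁ ∈ Finset.Ioc s (p s)) (h₂ : t₂ ∈ Finset.Ioc s (p s)),
        (fun t _ => gapCount S (x s) (x t + k t)) t₁ h₁ =
        (fun t _ => gapCount S (x s) (x t + k t)) t₂ h₂ → t₁ = t₂ := by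
      intro t₁ t₂ h₁ h₂ heq
      rw [Finset.mem_Ioc] at h₁ h₂
      have h₁r : t₁ ≤ r := le_trans h₁.2 hps2
      have h₂r : t₂ ≤ r := le_trans h₂.2 hps2
      have h₁1 : 1 ≤ t₁ := by omega
      have h₂1 : 1 ≤ t₂ := by omega
      obtain ⟨h₁notS, -⟩ := key1 t₁ h₁1 h₁r
      obtain ⟨h₂notS, -⟩ := key1 t₂ h₂1 h₂r
      obtain ⟨h₁k0, -, -⟩ := hk t₁ h₁1 h₁r
      obtain ⟨h₂k0, -, -⟩ := hk t₂ h₂1 h₂r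
      have hx1 : x s < x t₁ := hmono s t₁ hs1 h₁.1 h₁r
      have hx2 : x s < x t₂ := hmono s t₂ hs1 h₂.1 h₂r
      have heqv : x t₁ + k t₁ = x t₂ + k t₂ :=
        gap_eq S (by omega) (by omega) h₁notS h₂notS heq
      by_contra hne
      rcases lt_or_gt_of_ne hne with hlt | hlt
      · exact keyA t₁ t₂ h₁1 hlt h₂r heqv
      · exact keyA t₂ t₁ h₂1 hlt h₁r heqv.symm
    have hcard : (Finset.Icc 1 (p s - s)).card ≤ (Finset.Ioc s (p s)).card := by
      rw [Nat.card_Icc, Nat.card_Ioc]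
      omega
    obtain ⟨t, htmem, htm⟩ := Finset.surj_on_of_inj_on_of_card_le
      (fun t _ => gapCount S (x s) (x t + k t)) hmaps hinj hcard
      (gapCount S (x s) (x s + j)) (Finset.mem_Icc.mpr ⟨hm1, hm2⟩)
    rw [Finset.mem_Ioc] at htmem
    have htr : t ≤ r := le_trans htmem.2 hps2
    have ht1 : 1 ≤ t := by omega
    obtain ⟨hktnotS, -⟩ := key1 t ht1 htr
    obtain ⟨hkt0, -, -⟩ := hk t ht1 htr
    have hxst : x s < x t := hmono s t hs1 htmem.1 htr
    exact ⟨t, htmem.1, htr,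
      gap_eq S (by omega) (by omega) hjS hktnotS htm⟩
end
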